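/- Let f : ∂F_d → ℂ be a continuous function such that f(g·w^{+∞}) = f(g·w^{-∞}) for all g ∈ F_d and all w ∈ F_d \ {e}. Then f is constant. -/

import Mathlib

/-- The alphabet of the free group on `d` generators: a generator together with
a sign (`true` = the generator itself, `false` = its inverse). -/
abbrev Letter (d : ℕ) := Fin d × Bool

/-- The inverse of a letter. -/
def Letter.inv {d : ℕ} (a : Letter d) : Letter d := (a.1, !a.2)

/-- A sequence of letters is reduced if no letter is followed by its inverse. -/
def IsReducedSeq {d : ℕ} (x : ℕ → Letter d) : Prop :=
  ∀ n, x (n + 1) ≠ Letter.inv (x n)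

/-- The boundary `∂F_d` of the free group on `d` generators: the space of
infinite reduced words, topologized as a subspace of the product space
`(Fin d × Bool)^ℕ` (each factor discrete). -/
abbrev Boundary (d : ℕ) := {x : ℕ → Letter d // IsReducedSeq x}

/-- The number of letters cancelled at the junction when the (finite reduced)
word `u` is concatenated with the infinite reduced word `x`. -/
def cancelLen {d : ℕ} (u : List (Letter d)) (x : ℕ → Letter d) : ℕ :=
  Nat.findGreatest (fun k => ∀ i < k, u[u.length - 1 - i]? = some (Letter.inv (x i))) u.length

/-- The reduction of the concatenation of a finite reduced word `u` with an
infinite reduced word `x`. -/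
def concatReduce {d : ℕ} (u : List (Letter d)) (x : ℕ → Letter d) : ℕ → Letter d :=
  fun n =>
    let k := cancelLen u x
    let m := u.length - k
    if h : n < m then u[n]'(by omega) else x (k + (n - m))

open Classical in
/-- The boundary action of the free group on its boundary: left multiplication
followed by free reduction.  (The `if` always takes the `then` branch, since the
reduction of the concatenation of reduced words is again reduced; hence this is
exactly the usual boundary action `g · x`.) -/
noncomputable def boundaryAct {d : ℕ} (g : FreeGroup (Fin d)) (x : Boundary d) : Boundary d :=
  if h : IsReducedSeq (concatReduce (FreeGroup.toWord g) x.1) then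
    ⟨concatReduce (FreeGroup.toWord g) x.1, h⟩
  else x

/-- `x` is the boundary point `w^{+∞}`, the limit of the sequence `(wⁿ)ₙ₌₁^∞`:
for every `k` there is `N` such that for all `n ≥ N` the reduced word of `wⁿ`
has length at least `k` and its first `k` letters agree with those of `x`.
The point `w^{-∞}` is `(w⁻¹)^{+∞}`, i.e. `IsPlusLimit w⁻¹`. -/
def IsPlusLimit {d : ℕ} (w : FreeGroup (Fin d)) (x : Boundary d) : Prop :=
  ∀ k : ℕ, ∃ N : ℕ, ∀ n ≥ N,
    k ≤ (FreeGroup.toWord (w ^ n)).length ∧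
    ∀ i < k, (FreeGroup.toWord (w ^ n))[i]? = some (x.1 i)

/-- The relation `R_W = Δ ∪ {(g·w^{+∞}, g·w^{-∞}) : g ∈ F_d, w ∈ W ∪ W⁻¹}`
on the boundary `∂F_d`. -/
def RW {d : ℕ} (W : Set (FreeGroup (Fin d))) : Set (Boundary d × Boundary d) :=
  {p | p.1 = p.2} ∪
  {p | ∃ (g w : FreeGroup (Fin d)) (xp xm : Boundary d),
      (w ∈ W ∨ w⁻¹ ∈ W) ∧ IsPlusLimit w xp ∧ IsPlusLimit w⁻¹ xm ∧
      p.1 = boundaryAct g xp ∧ p.2 = boundaryAct g xm}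

open Classical in
/-- `p[w]` : the (`ℤ`-valued) indicator function of the cylinder set of the
reduced word of `w` in the boundary. -/
noncomputable def pFun {d : ℕ} (w : FreeGroup (Fin d)) : Boundary d → ℤ :=
  fun x =>
    if ∀ i < (FreeGroup.toWord w).length, (FreeGroup.toWord w)[i]? = some (x.1 i) then 1 else 0

/-- `q[s] = p[s] + p[s⁻¹]` for a generator `s`. -/
noncomputable def qFun {d : ℕ} (s : Fin d) : Boundary d → ℤ :=
  fun x => pFun (FreeGroup.of s) x + pFun (FreeGroup.of s)⁻¹ x

/-- `q[sⁿ] = p[sⁿ] + p[s⁻ⁿ]` for a generator `s`. -/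
noncomputable def qPow {d : ℕ} (s : Fin d) (n : ℕ) : Boundary d → ℤ :=
  fun x => pFun (FreeGroup.of s ^ n) x + pFun ((FreeGroup.of s ^ n)⁻¹) x

/-- The map `w ↦ ŵ` flipping the sign of the exponent of the last syllable of
the reduced word of `w`: if `w = s_{i(1)}^{n(1)} ⋯ s_{i(k)}^{n(k)}` then
`ŵ = s_{i(1)}^{n(1)} ⋯ s_{i(k-1)}^{n(k-1)} s_{i(k)}^{-n(k)}`.  (The final
syllable is the maximal terminal run of equal letters of the reduced word.) -/
def hatWord {d : ℕ} (w : FreeGroup (Fin d)) : FreeGroup (Fin d) :=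
  match (FreeGroup.toWord w).reverse with
  | [] => w
  | a :: _ =>
    let k := ((FreeGroup.toWord w).reverse.takeWhile (fun b => b == a)).length
    FreeGroup.mk ((FreeGroup.toWord w).take ((FreeGroup.toWord w).length - k) ++
      List.replicate k (Letter.inv a))


/-!
Let `x, y` be boundary points whose first letters differ. For each `k` pick a letter `m` with
`m ≠ x_k⁻¹` and `m ≠ y_k` (there are `2d ≥ 4` letters). Then `w = x₀ ⋯ x_k m y_k⁻¹ ⋯ y₀⁻¹` is
cyclically reduced, so `w^{+∞}` is the periodic word `w w w ⋯`, which begins with `x₀ ⋯ x_k`,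
and `w^{-∞}` is `w⁻¹ w⁻¹ ⋯`, which begins with `y₀ ⋯ y_k`. Hence `(x, y)` lies in the closure of
the pairs `(w^{+∞}, w^{-∞})`, on which the continuous `f` agrees, so `f x = f y`. Two arbitrary
points are linked through a constant word whose letter differs from both first letters.
-/

open Filter Topology FreeGroup

lemma FreeGroup.IsReduced.invRev {α : Type*} {L : List (α × Bool)} (h : IsReduced L) :
    IsReduced (invRev L) := by
  simpa [IsReduced, FreeGroup.invRev, List.isChain_reverse, List.isChain_map, eq_comm] using h

lemma FreeGroup.IsCyclicallyReduced.toWord_mk_pow {α : Type*} [DecidableEq α]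
    {L : List (α × Bool)} (h : IsCyclicallyReduced L) (n : ℕ) :
    (mk L ^ n).toWord = (List.replicate n L).flatten := by
  rw [toWord_pow, toWord_mk, h.isReduced.reduce_eq, (h.flatten_replicate n).isReduced.reduce_eq]

namespace Stream'

variable {α : Type*}

lemma cycle_eq_flatten_replicate_append (l : List α) (h : l ≠ []) (n : ℕ) :
    cycle l h = (List.replicate n l).flatten ++ₛ cycle l h := by
  induction n with
  | zero => rfl
  | succ n ih => rw [List.replicate_succ, List.flatten_cons, append_append_stream, ← ih, ← cycle_eq]

lemma take_cycle (l : List α) (h : l ≠ []) (n : ℕ) :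
    (cycle l h).take (n * l.length) = (List.replicate n l).flatten := by
  rw [cycle_eq_flatten_replicate_append l h n, take_append_of_le_length _ _ _ (by simp)]
  exact List.take_of_length_le (by simp)

lemma take_cycle_of_le_length {l : List α} (h : l ≠ []) {n : ℕ} (hn : n ≤ l.length) :
    (cycle l h).take n = l.take n := by
  rw [cycle_eq, take_append_of_le_length _ _ _ hn]

@[simp] lemma head?_take_succ (s : Stream' α) (n : ℕ) : (s.take (n + 1)).head? = some (s.get 0) :=
  rfl

@[simp] lemma getLast?_take_succ (s : Stream' α) (n : ℕ) :
    (s.take (n + 1)).getLast? = some (s.get n) := by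
  rw [take_succ', List.getLast?_concat]

end Stream'

lemma exists_ne_ne_of_two_lt_card {α : Type*} [Fintype α] (h : 2 < Fintype.card α) (a b : α) :
    ∃ c, c ≠ a ∧ c ≠ b := by
  classical
  obtain ⟨c, -, hc⟩ := Finset.exists_mem_notMem_of_card_lt_card
    (s := {a, b}) (t := Finset.univ) (Finset.card_le_two.trans_lt h)
  exact ⟨c, by simpa [not_or] using hc⟩

lemma tendsto_of_take_succ_eq {α : Type*} [TopologicalSpace α] [DiscreteTopology α]
    {p : (ℕ → α) → Prop} {x : Subtype p} {z : ℕ → Subtype p}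
    (hz : ∀ k, Stream'.take (k + 1) (z k).1 = Stream'.take (k + 1) x.1) :
    Tendsto z atTop (𝓝 x) := by
  rw [tendsto_subtype_rng, tendsto_pi_nhds]
  intro i
  rw [nhds_discrete, tendsto_pure]
  filter_upwards [eventually_ge_atTop i] with k hk
  have hi : i < k + 1 := Nat.lt_succ_of_le hk
  exact Option.some_injective _ <| (Stream'.getElem?_take hi).symm.trans
    ((congrArg (·[i]?) (hz k)).trans (Stream'.getElem?_take hi))

namespace Letter

variable {d : ℕ}

@[simp] lemma inv_inv (a : Letter d) : a.inv.inv = a := by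
  simp [Letter.inv]

@[simp] lemma inv_inj {a b : Letter d} : a.inv = b.inv ↔ a = b :=
  ⟨fun h => by simpa using congrArg Letter.inv h, congrArg Letter.inv⟩

lemma inv_ne_self (a : Letter d) : a.inv ≠ a := by
  simp [Letter.inv, Prod.ext_iff]

lemma rel_iff_ne_inv (a b : Letter d) : (a.1 = b.1 → a.2 = b.2) ↔ b ≠ a.inv := by
  obtain ⟨i, s⟩ := a
  obtain ⟨j, t⟩ := b
  cases s <;> cases t <;> simp [Letter.inv, eq_comm]

@[simp] lemma invRev_singleton (a : Letter d) : invRev [a] = [a.inv] := rfl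

lemma two_lt_card (hd : 2 ≤ d) : 2 < Fintype.card (Letter d) := by
  simp only [Fintype.card_prod, Fintype.card_fin, Fintype.card_bool]
  omega

end Letter

section Boundary

variable {d : ℕ}

@[simp] lemma head?_invRev (L : List (Letter d)) :
    (invRev L).head? = L.getLast?.map Letter.inv := by
  simp only [invRev, List.head?_reverse, List.getLast?_map]
  rfl

@[simp] lemma getLast?_invRev (L : List (Letter d)) :
    (invRev L).getLast? = L.head?.map Letter.inv := by
  simp only [invRev, List.getLast?_reverse, List.head?_map]
  rfl

lemma isReducedSeq_iff_forall_isReduced_take {x : Stream' (Letter d)} :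
    IsReducedSeq x ↔ ∀ n, IsReduced (x.take n) := by
  simp only [IsReducedSeq, FreeGroup.IsReduced, List.isChain_iff_getElem, Stream'.length_take,
    Stream'.take_get, Letter.rel_iff_ne_inv]
  exact ⟨fun hx n i _ => hx i, fun hx i => hx (i + 2) i (by omega)⟩

lemma isReducedSeq_const (a : Letter d) : IsReducedSeq fun _ => a :=
  fun _ => (Letter.inv_ne_self a).symm

lemma isReducedSeq_cycle {u : List (Letter d)} (hu : IsCyclicallyReduced u) (hne : u ≠ []) :
    IsReducedSeq (Stream'.cycle u hne) := by
  refine isReducedSeq_iff_forall_isReduced_take.2 fun n => ?_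
  have hn : n ≤ n * u.length := Nat.le_mul_of_pos_right n (List.length_pos_iff.2 hne)
  refine (hu.flatten_replicate n).isReduced.infix ?_
  rw [← Stream'.take_cycle u hne]
  exact ((Stream'.take_prefix _ _ _).2 hn).isInfix

lemma isPlusLimit_mk_cycle {u : List (Letter d)} (hu : IsCyclicallyReduced u) (hne : u ≠ []) :
    IsPlusLimit (mk u) ⟨Stream'.cycle u hne, isReducedSeq_cycle hu hne⟩ := by
  intro k
  refine ⟨k, fun n hn => ?_⟩
  have hk : k ≤ n * u.length := hn.trans (Nat.le_mul_of_pos_right n (List.length_pos_iff.2 hne))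
  rw [hu.toWord_mk_pow, ← Stream'.take_cycle u hne]
  exact ⟨by simpa using hk, fun i hi => Stream'.getElem?_take (by omega)⟩

def bridgeWord (x y : Stream' (Letter d)) (k : ℕ) (m : Letter d) : List (Letter d) :=
  x.take (k + 1) ++ [m] ++ invRev (y.take (k + 1))

lemma bridgeWord_ne_nil (x y : Stream' (Letter d)) (k : ℕ) (m : Letter d) :
    bridgeWord x y k m ≠ [] := by
  simp [bridgeWord]

lemma inv_mk_bridgeWord (x y : Stream' (Letter d)) (k : ℕ) (m : Letter d) :
    (mk (bridgeWord x y k m))⁻¹ = mk (bridgeWord y x k m.inv) := by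
  simp only [inv_mk, bridgeWord, invRev_append, invRev_invRev, Letter.invRev_singleton,
    List.append_assoc]

lemma take_cycle_bridgeWord (x y : Stream' (Letter d)) (k : ℕ) (m : Letter d) :
    (Stream'.cycle _ (bridgeWord_ne_nil x y k m)).take (k + 1) = x.take (k + 1) := by
  rw [Stream'.take_cycle_of_le_length _ (by simp [bridgeWord])]
  simp [bridgeWord]

lemma isCyclicallyReduced_bridgeWord {x y : Stream' (Letter d)} (hx : IsReducedSeq x)
    (hy : IsReducedSeq y) (h₀ : x.get 0 ≠ y.get 0) {k : ℕ} {m : Letter d}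
    (hmx : m ≠ (x.get k).inv) (hmy : m ≠ y.get k) :
    IsCyclicallyReduced (bridgeWord x y k m) := by
  have hxr := isReducedSeq_iff_forall_isReduced_take.1 hx (k + 1)
  have hyr := (isReducedSeq_iff_forall_isReduced_take.1 hy (k + 1)).invRev
  have hlast : (bridgeWord x y k m).getLast? = some (y.get 0).inv := by
    rw [bridgeWord, List.getLast?_append, getLast?_invRev, Stream'.head?_take_succ]
    rfl
  refine ⟨(hxr.append (List.isChain_singleton m) ?_).append hyr ?_, ?_⟩
  · simp [Letter.rel_iff_ne_inv, hmx]
  · simp [Letter.rel_iff_ne_inv, Ne.symm hmy]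
  · rw [hlast]
    simp [bridgeWord, Letter.rel_iff_ne_inv, h₀]

lemma exists_limitPair_take_eq (hd : 2 ≤ d) {x y : Boundary d} (h₀ : x.1 0 ≠ y.1 0) (k : ℕ) :
    ∃ w ≠ (1 : FreeGroup (Fin d)), ∃ xp xm : Boundary d,
      IsPlusLimit w xp ∧ IsPlusLimit w⁻¹ xm ∧
      Stream'.take (k + 1) xp.1 = Stream'.take (k + 1) x.1 ∧
      Stream'.take (k + 1) xm.1 = Stream'.take (k + 1) y.1 := by
  obtain ⟨m, hmx, hmy⟩ := exists_ne_ne_of_two_lt_card (Letter.two_lt_card hd) (x.1 k).inv (y.1 k)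
  have hu := isCyclicallyReduced_bridgeWord x.2 y.2 h₀ hmx hmy
  have hu' : IsCyclicallyReduced (bridgeWord y.1 x.1 k m.inv) :=
    isCyclicallyReduced_bridgeWord y.2 x.2 h₀.symm (by simpa using hmy : m.inv ≠ (y.1 k).inv)
      (fun h => hmx (by rw [← h, Letter.inv_inv]) : m.inv ≠ x.1 k)
  have hne := bridgeWord_ne_nil x.1 y.1 k m
  have hne' := bridgeWord_ne_nil y.1 x.1 k m.inv
  refine ⟨mk (bridgeWord x.1 y.1 k m), fun h1 => hne ?_, ⟨_, isReducedSeq_cycle hu hne⟩,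
    ⟨_, isReducedSeq_cycle hu' hne'⟩, isPlusLimit_mk_cycle hu hne, ?_,
    take_cycle_bridgeWord _ _ _ _, take_cycle_bridgeWord _ _ _ _⟩
  · rw [← hu.isReduced.reduce_eq, ← toWord_mk, h1, toWord_one]
  · convert isPlusLimit_mk_cycle hu' hne' using 1
    exact inv_mk_bridgeWord _ _ _ _

lemma mem_closure_limitPairs (hd : 2 ≤ d) {x y : Boundary d} (h₀ : x.1 0 ≠ y.1 0) :
    (x, y) ∈ closure {p : Boundary d × Boundary d |
      ∃ w ≠ (1 : FreeGroup (Fin d)), IsPlusLimit w p.1 ∧ IsPlusLimit w⁻¹ p.2} := by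
  choose w hw xp xm hp hm hxp hxm using exists_limitPair_take_eq hd h₀
  exact mem_closure_of_tendsto
    ((tendsto_of_take_succ_eq hxp).prodMk_nhds (tendsto_of_take_succ_eq hxm))
    (Eventually.of_forall fun k => ⟨w k, hw k, hp k, hm k⟩)

lemma eq_of_continuous_of_forall_isPlusLimit {X : Type*} [TopologicalSpace X] [T2Space X]
    (hd : 2 ≤ d) {f : Boundary d → X} (hf : Continuous f)
    (h : ∀ w ≠ (1 : FreeGroup (Fin d)), ∀ xp xm : Boundary d,
      IsPlusLimit w xp → IsPlusLimit w⁻¹ xm → f xp = f xm)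
    (x y : Boundary d) : f x = f y := by
  have heq_of_ne : ∀ x y : Boundary d, x.1 0 ≠ y.1 0 → f x = f y := fun x y h₀ =>
    closure_minimal (by rintro p ⟨w, hw, hp, hm⟩; exact h w hw _ _ hp hm)
      (isClosed_eq (hf.comp continuous_fst) (hf.comp continuous_snd))
      (mem_closure_limitPairs hd h₀)
  obtain ⟨m, hmx, hmy⟩ := exists_ne_ne_of_two_lt_card (Letter.two_lt_card hd) (x.1 0) (y.1 0)
  let z : Boundary d := ⟨fun _ => m, isReducedSeq_const m⟩
  exact (heq_of_ne x z (Ne.symm hmx)).trans (heq_of_ne z y hmy)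

lemma concatReduce_nil (x : ℕ → Letter d) : concatReduce [] x = x := by
  funext n
  simp [concatReduce, cancelLen]

lemma boundaryAct_one (x : Boundary d) : boundaryAct 1 x = x := by
  unfold boundaryAct
  split_ifs <;> simp [concatReduce_nil]

end Boundary

/-- A continuous function `f : ∂F_d → ℂ` satisfying
`f(g·w^{+∞}) = f(g·w^{-∞})` for all `g ∈ F_d` and all `w ∈ F_d \ {e}` is
constant. -/
theorem continuous_constant_on_limit_pairs (d : ℕ) (hd : 2 ≤ d)
    (f : Boundary d → ℂ) (hf : Continuous f)
    (h : ∀ (g w : FreeGroup (Fin d)), w ≠ 1 →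
      ∀ xp xm : Boundary d, IsPlusLimit w xp → IsPlusLimit w⁻¹ xm →
        f (boundaryAct g xp) = f (boundaryAct g xm)) :
    ∃ c : ℂ, ∀ x : Boundary d, f x = c := by
  have h₁ : ∀ w ≠ (1 : FreeGroup (Fin d)), ∀ xp xm : Boundary d,
      IsPlusLimit w xp → IsPlusLimit w⁻¹ xm → f xp = f xm := fun w hw xp xm hp hm => by
    simpa only [boundaryAct_one] using h 1 w hw xp xm hp hm
  let x₀ : Boundary d := ⟨fun _ => (⟨0, by omega⟩, true), isReducedSeq_const _⟩
  exact ⟨f x₀, fun x => eq_of_continuous_of_forall_isPlusLimit hd hf h₁ x x₀⟩
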